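/- Let U be a real Hilbert space, Φ₂ a bounded self-adjoint linear operator on U, φ₁ ∈ U and φ₀ ∈ ℝ, and define J(u) = ⟨Φ₂ u, u⟩ + 2⟨u, φ₁⟩ + φ₀. Then J attains a minimum on U (i.e., there exists ū ∈ U with J(ū) ≤ J(u) for all u ∈ U) if and only if ⟨Φ₂ u, u⟩ ≥ 0 for all u ∈ U and φ₁ lies in the range of Φ₂. -/

import Mathlib

open scoped RealInnerProductSpace

/-!
Expanding around `v` gives `J (v + h) = J v + ⟪Φ₂ h, h⟫ + 2 ⟪Φ₂ v + φ₁, h⟫`. If `v` is a minimizer,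
then along each line `t ↦ v + t h` the polynomial `⟪Φ₂ h, h⟫ t² + 2 ⟪Φ₂ v + φ₁, h⟫ t` is nonnegative,
which forces its linear coefficient to vanish; hence `Φ₂ v = -φ₁` and `⟪Φ₂ h, h⟫ ≥ 0`. Conversely,
if `Φ₂ v = -φ₁` and `Φ₂` is positive, the expansion shows `J (v + h) ≥ J v`.
-/

lemma eq_zero_of_forall_nonneg_mul_sq_add {a b : ℝ} (h : ∀ t : ℝ, 0 ≤ a * t ^ 2 + 2 * b * t) :
    b = 0 := by
  have hdisc : discrim a (2 * b) 0 ≤ 0 :=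
    discrim_le_zero fun t => by simpa [sq] using h t
  rw [discrim] at hdisc
  nlinarith [sq_nonneg b]

section QuadraticFunctional

variable {U : Type*} [NormedAddCommGroup U] [InnerProductSpace ℝ U]

def quadraticFunctional (T : U →ₗ[ℝ] U) (b : U) (c : ℝ) (u : U) : ℝ :=
  ⟪T u, u⟫ + 2 * ⟪u, b⟫ + c

variable {T : U →ₗ[ℝ] U} {b : U} {c : ℝ}

lemma quadraticFunctional_add (hT : T.IsSymmetric) (v h : U) :
    quadraticFunctional T b c (v + h) =
      quadraticFunctional T b c v + ⟪T h, h⟫ + 2 * ⟪T v + b, h⟫ := by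
  have hsymm : ⟪T h, v⟫ = ⟪T v, h⟫ := by rw [hT, real_inner_comm]
  simp only [quadraticFunctional, map_add, inner_add_left, inner_add_right,
    real_inner_comm b h]
  linarith

lemma quadraticFunctional_add_smul (hT : T.IsSymmetric) (v h : U) (t : ℝ) :
    quadraticFunctional T b c (v + t • h) =
      quadraticFunctional T b c v + ⟪T h, h⟫ * t ^ 2 + 2 * ⟪T v + b, h⟫ * t := by
  rw [quadraticFunctional_add hT, map_smul, inner_smul_left, inner_smul_right, inner_smul_right]
  simp only [conj_trivial]
  ring

lemma isMinOn_quadraticFunctional_iff (hT : T.IsSymmetric) (v : U) :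
    IsMinOn (quadraticFunctional T b c) Set.univ v ↔ (∀ u, 0 ≤ ⟪T u, u⟫) ∧ T v = -b := by
  simp only [isMinOn_univ_iff]
  constructor
  · intro hmin
    have hgrad : ∀ h, ⟪T v + b, h⟫ = 0 := fun h =>
      eq_zero_of_forall_nonneg_mul_sq_add (a := ⟪T h, h⟫) fun t => by
        have := hmin (v + t • h)
        rw [quadraticFunctional_add_smul hT] at this
        linarith
    refine ⟨fun u => ?_, eq_neg_of_add_eq_zero_left (inner_self_eq_zero.mp (hgrad _))⟩
    have := hmin (v + u)
    rw [quadraticFunctional_add hT, hgrad u] at this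
    linarith
  · rintro ⟨hpos, hv⟩ u
    have := quadraticFunctional_add (b := b) (c := c) hT v (u - v)
    rw [add_sub_cancel, hv, neg_add_cancel, inner_zero_left] at this
    linarith [hpos (u - v)]

end QuadraticFunctional

theorem quadratic_functional_attains_min_iff
    {U : Type*} [NormedAddCommGroup U] [InnerProductSpace ℝ U]
    (Φ₂ : U →L[ℝ] U) (hΦ₂ : ∀ u v : U, ⟪Φ₂ u, v⟫ = ⟪u, Φ₂ v⟫)
    (φ₁ : U) (φ₀ : ℝ) (J : U → ℝ)
    (hJ : ∀ u : U, J u = ⟪Φ₂ u, u⟫ + 2 * ⟪u, φ₁⟫ + φ₀) :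
    (∃ ubar : U, ∀ u : U, J ubar ≤ J u) ↔
      ((∀ u : U, 0 ≤ ⟪Φ₂ u, u⟫) ∧ φ₁ ∈ Set.range Φ₂) := by
  have hJ' : J = quadraticFunctional (Φ₂ : U →ₗ[ℝ] U) φ₁ φ₀ := funext hJ
  subst hJ'
  simp only [← isMinOn_univ_iff, isMinOn_quadraticFunctional_iff hΦ₂, ContinuousLinearMap.coe_coe]
  constructor
  · rintro ⟨v, hpos, hv⟩
    exact ⟨hpos, -v, by rw [map_neg, hv, neg_neg]⟩
  · rintro ⟨hpos, v, hv⟩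
    exact ⟨-v, hpos, by rw [map_neg, hv]⟩
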